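/- arXiv:2209.15240 — 2 statements merged into one kernel-verified Lean document; each statement's English description precedes it below -/
import Mathlib

section
/- Explicit prompt formula for feature transformations: with f(A, X) = 𝟙ᵀ(A + (1+ε)I)·X·Θ, set B = (A + (1+ε)I)·(X' − X) and define p = (𝟙ᵀB)/(D + N + Nε), where D = Σ_{ij}A_{ij} and D + N + Nε ≠ 0. Then f(A, X + 𝟙·p) = f(A, X'). -/
open Matrix BigOperators

/-- One-layer linear GIN with sum readout: 𝟙ᵀ (A + (1+ε) I) X Θ as a row vector. -/
noncomputable def gin {n : Type*} [Fintype n] [DecidableEq n] {F Fp : ℕ}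
    (ε : ℝ) (Θ : Matrix (Fin F) (Fin Fp) ℝ)
    (A : Matrix n n ℝ) (X : Matrix n (Fin F) ℝ) : Fin Fp → ℝ :=
  fun j => ∑ i, ((A + (1 + ε) • (1 : Matrix n n ℝ)) * X * Θ) i j

/-- 𝟙·p : the matrix each of whose rows is the row vector p. -/
def prompt (n : Type*) {F : ℕ} (p : Fin F → ℝ) : Matrix n (Fin F) ℝ :=
  Matrix.of fun _ j => p j

/-! The readout `gin` sees `X` only through the column sums `𝟙ᵀ M X`, where
`M = A + (1 + ε) I`. Adding the prompt `𝟙 p` changes them by `(𝟙ᵀ M 𝟙) p`, and replacing `X`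
by `X'` changes them by `𝟙ᵀ B`; the choice of `p` makes the two increments equal, since
`𝟙ᵀ M 𝟙 = D + N + N ε`. -/

section

variable {n : Type*} [Fintype n]

theorem gin_eq_vecMul [DecidableEq n] {F Fp : ℕ} (ε : ℝ) (Θ : Matrix (Fin F) (Fin Fp) ℝ)
    (A : Matrix n n ℝ) (X : Matrix n (Fin F) ℝ) :
    gin ε Θ A X = ((1 : n → ℝ) ᵥ* ((A + (1 + ε) • (1 : Matrix n n ℝ)) * X)) ᵥ* Θ := by
  rw [vecMul_vecMul]
  ext j
  simp [gin, vecMul, dotProduct]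

theorem one_vecMul_mul_prompt {F : ℕ} (M : Matrix n n ℝ) (p : Fin F → ℝ) :
    (1 : n → ℝ) ᵥ* (M * prompt n p) = (∑ i, ∑ j, M i j) • p := by
  rw [← vecMul_vecMul]
  ext k
  simp only [vecMul, dotProduct, prompt, of_apply, Pi.one_apply, one_mul, Pi.smul_apply,
    smul_eq_mul, Finset.sum_mul]
  exact Finset.sum_comm

theorem sum_sum_add_smul_one [DecidableEq n] (A : Matrix n n ℝ) (c : ℝ) :
    ∑ i, ∑ j, (A + c • (1 : Matrix n n ℝ)) i j = ∑ i, ∑ j, A i j + Fintype.card n * c := by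
  simp [one_apply, Finset.sum_add_distrib]

end

theorem stmt3 (N F Fp : ℕ) (A : Matrix (Fin N) (Fin N) ℝ)
    (X X' : Matrix (Fin N) (Fin F) ℝ) (ε : ℝ) (Θ : Matrix (Fin F) (Fin Fp) ℝ)
    (hD : (∑ i, ∑ j, A i j) + N + N * ε ≠ 0)
    (B : Matrix (Fin N) (Fin F) ℝ)
    (hB : B = (A + (1 + ε) • (1 : Matrix (Fin N) (Fin N) ℝ)) * (X' - X))
    (p : Fin F → ℝ)
    (hp : p = fun j => (∑ i, B i j) / ((∑ i, ∑ j, A i j) + N + N * ε)) :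
    gin ε Θ A (X + prompt (Fin N) p) = gin ε Θ A X' := by
  set M := A + (1 + ε) • (1 : Matrix (Fin N) (Fin N) ℝ)
  have hM : ∑ i, ∑ j, M i j = (∑ i, ∑ j, A i j) + N + N * ε := by
    rw [sum_sum_add_smul_one, Fintype.card_fin]
    ring
  have hprompt : (1 : Fin N → ℝ) ᵥ* (M * prompt (Fin N) p) = 1 ᵥ* B := by
    rw [one_vecMul_mul_prompt, hM, hp]
    ext j
    simp [vecMul, dotProduct, mul_div_cancel₀ _ hD]
  rw [gin_eq_vecMul, gin_eq_vecMul, Matrix.mul_add, vecMul_add, hprompt, hB, ← vecMul_add,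
    ← Matrix.mul_add, add_sub_cancel]
end

section
/- GCN-layer version of feature coverage: Let f(A, X) = 𝟙ᵀ·D̃^{-1/2}·Ã·D̃^{-1/2}·X·Θ where Ã = A + I and D̃ is the diagonal degree matrix of Ã, assumed positive on the diagonal. If the row vector s = 𝟙ᵀ·D̃^{-1/2}·Ã·D̃^{-1/2}·𝟙 is nonzero (it equals Σ_{ij}(D̃^{-1/2}ÃD̃^{-1/2})_{ij} > 0 for a symmetric nonnegative Ã with positive degrees), then for any X' ∈ ℝ^{N×F} there exists p ∈ ℝ^{1×F} with f(A, X + 𝟙·p) = f(A, X'). -/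
/-!
Every row of `X + 𝟙·p` is shifted by `p`, so a readout `w ᵀ (X + 𝟙·p)` is shifted by
`(∑ w) • p`. The GCN output factors through the readout `w = 𝟙ᵀ D̃^(-1/2) Ã D̃^(-1/2)` of `X`,
whose total weight is the scalar `c` of the hypothesis; when `c ≠ 0` the shift can be chosen to
hit `w ᵀ X'` exactly.
-/

open Matrix BigOperators

/-- One-layer GCN with sum readout: 𝟙ᵀ D̃^(-1/2) Ã D̃^(-1/2) X Θ with Ã = A + I. -/
noncomputable def gcn (N : ℕ) {F Fp : ℕ} (Θ : Matrix (Fin F) (Fin Fp) ℝ)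
    (A : Matrix (Fin N) (Fin N) ℝ) (X : Matrix (Fin N) (Fin F) ℝ) : Fin Fp → ℝ :=
  let At := A + (1 : Matrix (Fin N) (Fin N) ℝ)
  let Dh := Matrix.diagonal (fun i => (Real.sqrt (∑ j, At i j))⁻¹)
  fun j => ∑ i, (Dh * At * Dh * X * Θ) i j

theorem vecMul_prompt {n : Type*} [Fintype n] {F : ℕ} (w : n → ℝ) (p : Fin F → ℝ) :
    w ᵥ* prompt n p = (∑ i, w i) • p := by
  ext k
  simp [vecMul, dotProduct, prompt, Finset.sum_mul]

theorem exists_vecMul_add_prompt_eq {n : Type*} [Fintype n] {F : ℕ} {w : n → ℝ}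
    (hw : ∑ i, w i ≠ 0) (X X' : Matrix n (Fin F) ℝ) :
    ∃ p, w ᵥ* (X + prompt n p) = w ᵥ* X' :=
  ⟨(∑ i, w i)⁻¹ • (w ᵥ* X' - w ᵥ* X), by
    rw [vecMul_add, vecMul_prompt, smul_inv_smul₀ hw, add_sub_cancel]⟩

theorem one_vecMul_apply {m n α : Type*} [NonAssocSemiring α] [Fintype m]
    (M : Matrix m n α) (j : n) :
    (1 ᵥ* M) j = ∑ i, M i j := by
  simp [vecMul_apply_eq_sum]

theorem sum_one_vecMul {n α : Type*} [NonAssocSemiring α] [Fintype n] (M : Matrix n n α) :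
    ∑ j, (1 ᵥ* M) j = ∑ i, ∑ j, M i j := by
  simp only [one_vecMul_apply]
  exact Finset.sum_comm

noncomputable def normAdj {N : ℕ} (A : Matrix (Fin N) (Fin N) ℝ) : Matrix (Fin N) (Fin N) ℝ :=
  Matrix.diagonal (fun i => (Real.sqrt (∑ j, (A + 1) i j))⁻¹) * (A + 1) *
    Matrix.diagonal (fun i => (Real.sqrt (∑ j, (A + 1) i j))⁻¹)

theorem gcn_eq_vecMul (N : ℕ) {F Fp : ℕ} (Θ : Matrix (Fin F) (Fin Fp) ℝ)
    (A : Matrix (Fin N) (Fin N) ℝ) (X : Matrix (Fin N) (Fin F) ℝ) :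
    gcn N Θ A X = (1 ᵥ* normAdj A) ᵥ* X ᵥ* Θ := by
  ext j
  rw [vecMul_vecMul, vecMul_vecMul, ← Matrix.mul_assoc, one_vecMul_apply]
  rfl

theorem stmt12_general (N F Fp : ℕ) (A : Matrix (Fin N) (Fin N) ℝ)
    (X X' : Matrix (Fin N) (Fin F) ℝ) (Θ : Matrix (Fin F) (Fin Fp) ℝ)
    (hs : (∑ i, ∑ j,
        (Matrix.diagonal (fun i => (Real.sqrt (∑ j, (A + (1 : Matrix (Fin N) (Fin N) ℝ)) i j))⁻¹)
          * (A + (1 : Matrix (Fin N) (Fin N) ℝ))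
          * Matrix.diagonal (fun i => (Real.sqrt (∑ j, (A + (1 : Matrix (Fin N) (Fin N) ℝ)) i j))⁻¹)) i j) ≠ 0) :
    ∃ p : Fin F → ℝ, gcn N Θ A (X + prompt (Fin N) p) = gcn N Θ A X' := by
  have hw : ∑ j, (1 ᵥ* normAdj A) j ≠ 0 := by
    rwa [sum_one_vecMul]
  obtain ⟨p, hp⟩ := exists_vecMul_add_prompt_eq hw X X'
  exact ⟨p, by rw [gcn_eq_vecMul, gcn_eq_vecMul, hp]⟩

theorem stmt12 (N F Fp : ℕ) (A : Matrix (Fin N) (Fin N) ℝ)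
    (X X' : Matrix (Fin N) (Fin F) ℝ) (Θ : Matrix (Fin F) (Fin Fp) ℝ)
    (hdeg : ∀ i, 0 < ∑ j, (A + (1 : Matrix (Fin N) (Fin N) ℝ)) i j)
    (hs : (∑ i, ∑ j,
        (Matrix.diagonal (fun i => (Real.sqrt (∑ j, (A + (1 : Matrix (Fin N) (Fin N) ℝ)) i j))⁻¹)
          * (A + (1 : Matrix (Fin N) (Fin N) ℝ))
          * Matrix.diagonal (fun i => (Real.sqrt (∑ j, (A + (1 : Matrix (Fin N) (Fin N) ℝ)) i j))⁻¹)) i j) ≠ 0) :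
    ∃ p : Fin F → ℝ, gcn N Θ A (X + prompt (Fin N) p) = gcn N Θ A X' :=
  stmt12_general N F Fp A X X' Θ hs
end
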